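/- Finite speed of propagation of dependence on the potential: let M ≥ 0 and let b, b̃ : ℕ → ℝ be two potentials with b_n = b̃_n for all 1 ≤ n ≤ M. Then for every control f : ℕ → ℝ and every 0 ≤ t ≤ 2M+1, the corresponding solutions satisfy u^f_{1,t} = ũ^f_{1,t}, where u^f and ũ^f are the solutions of the system with potentials b and b̃ respectively. -/
import Mathlib


/-- `sol b f t n` is the solution `u^f_{n,t}` of the discrete Schrödinger dynamical system
with potential `b` and boundary control `f`:
`u_{n,t+1} + u_{n,t-1} - u_{n+1,t} - u_{n-1,t} + b_n u_{n,t} = 0` for `n ≥ 1`, `t ≥ 0`,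
`u_{n,-1} = u_{n,0} = 0` for `n ≥ 1`, and `u_{0,t} = f_t` for `t ≥ 0`
(the first argument is the time `t`, the second the space variable `n`). -/
noncomputable def sol (b f : ℕ → ℝ) : ℕ → ℕ → ℝ
  | 0, n => if n = 0 then f 0 else 0
  | 1, n => if n = 0 then f 1 else
      sol b f 0 (n + 1) + sol b f 0 (n - 1) - b n * sol b f 0 n
  | (t + 2), n => if n = 0 then f (t + 2) else
      sol b f (t + 1) (n + 1) + sol b f (t + 1) (n - 1) - b n * sol b f (t + 1) n - sol b f t n

lemma sol_zero_left (b f : ℕ → ℝ) (n : ℕ) (hn : n ≠ 0) : sol b f 0 n = 0 := by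
  rw [sol, if_neg hn]

lemma sol_one (b f : ℕ → ℝ) (n : ℕ) (hn : n ≠ 0) :
    sol b f 1 n = sol b f 0 (n+1) + sol b f 0 (n-1) - b n * sol b f 0 n := by
  conv_lhs => rw [sol]
  rw [if_neg hn]

lemma sol_ss (b f : ℕ → ℝ) (t n : ℕ) (hn : n ≠ 0) :
    sol b f (t+2) n = sol b f (t+1) (n+1) + sol b f (t+1) (n-1)
      - b n * sol b f (t+1) n - sol b f t n := by
  conv_lhs => rw [sol]
  rw [if_neg hn]

lemma sol_zero_right (b f : ℕ → ℝ) (t : ℕ) : sol b f t 0 = f t := by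
  match t with
  | 0 => simp [sol]
  | 1 => simp [sol]
  | t + 2 => simp [sol]

lemma sol_vanish (b f : ℕ → ℝ) : ∀ t n, t < n → sol b f t n = 0 := by
  intro t
  induction t using Nat.strong_induction_on with
  | _ t ih =>
    match t with
    | 0 =>
      intro n hn
      exact sol_zero_left b f n (by omega)
    | 1 =>
      intro n hn
      rw [sol_one b f n (by omega),
        sol_zero_left b f (n+1) (by omega),
        sol_zero_left b f (n-1) (by omega),
        sol_zero_left b f n (by omega)]
      ring
    | t + 2 =>
      intro n hn
      rw [sol_ss b f t n (by omega),
        ih (t+1) (by omega) (n+1) (by omega),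
        ih (t+1) (by omega) (n-1) (by omega),
        ih (t+1) (by omega) n (by omega),
        ih t (by omega) n (by omega)]
      ring

lemma key (M : ℕ) (b btil : ℕ → ℝ)
    (hb : ∀ n, 1 ≤ n → n ≤ M → b n = btil n) (f : ℕ → ℝ) :
    ∀ t n, 1 ≤ n → t + n ≤ 2 * M + 2 → sol b f t n = sol btil f t n := by
  intro t
  induction t using Nat.strong_induction_on with
  | _ t ih =>
    match t with
    | 0 =>
      intro n hn _
      rw [sol_zero_left b f n (by omega), sol_zero_left btil f n (by omega)]
    | 1 =>
      intro n hn _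
      have h2 : sol b f 0 (n-1) = sol btil f 0 (n-1) := by
        rcases Nat.eq_or_lt_of_le hn with h | h
        · rw [← h]; simp [sol_zero_right]
        · rw [sol_zero_left b f (n-1) (by omega), sol_zero_left btil f (n-1) (by omega)]
      rw [sol_one b f n (by omega), sol_one btil f n (by omega),
        sol_zero_left b f (n+1) (by omega), sol_zero_left btil f (n+1) (by omega),
        sol_zero_left b f n (by omega), sol_zero_left btil f n (by omega), h2]
      ring
    | t + 2 =>
      intro n hn hle
      have hnm1 : sol b f (t+1) (n-1) = sol btil f (t+1) (n-1) := by
        rcases Nat.eq_or_lt_of_le hn with h | h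
        · rw [← h]; simp [sol_zero_right]
        · exact ih (t+1) (by omega) (n-1) (by omega) (by omega)
      rw [sol_ss b f t n (by omega), sol_ss btil f t n (by omega), hnm1]
      by_cases hM : n ≤ M
      · rw [hb n hn hM,
          ih (t+1) (by omega) (n+1) (by omega) (by omega),
          ih (t+1) (by omega) n hn (by omega),
          ih t (by omega) n hn (by omega)]
      · have hn2 : t + 2 ≤ n := by omega
        rw [sol_vanish b f (t+1) (n+1) (by omega),
          sol_vanish btil f (t+1) (n+1) (by omega),
          sol_vanish b f (t+1) n (by omega),
          sol_vanish btil f (t+1) n (by omega),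
          sol_vanish b f t n (by omega),
          sol_vanish btil f t n (by omega)]
        ring

/-- Finite speed of propagation of the dependence on the potential. -/
theorem finite_speed_potential (M : ℕ) (b btil : ℕ → ℝ)
    (hb : ∀ n, 1 ≤ n → n ≤ M → b n = btil n) :
    ∀ f : ℕ → ℝ, ∀ t, t ≤ 2 * M + 1 → sol b f t 1 = sol btil f t 1 := by
  intro f t ht
  exact key M b btil hb f t 1 le_rfl (by omega)
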